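/- arXiv:1811.10378 — 7 statements merged into one kernel-verified Lean document; each statement's English description precedes it below -/
import Mathlib

section
/- For real tensors A of size I₁×⋯×I_M×I₁×⋯×I_M, B and D of size I₁×⋯×I_M×J₁×⋯×J_N, and C of size J₁×⋯×J_N×J₁×⋯×J_N: (A ⊗ B) *_N (D ⊗ C) = (A *_M D) ⊗ (B *_N C), where ⊗ is the tensor Kronecker product. -/
open scoped BigOperators

/-- Multi-index of shape `I₁ × ⋯ × I_M`. -/
abbrev MIdx {M : ℕ} (I : Fin M → ℕ) := (k : Fin M) → Fin (I k)

/-- Einstein product: contraction over the shared (middle) index group. -/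
def eprod {α β γ : Type*} [Fintype β] (A : α → β → ℝ) (B : β → γ → ℝ) :
    α → γ → ℝ := fun a c => ∑ b, A a b * B b c

/-- Generalized trace of a square tensor. -/
def ttrace {α : Type*} [Fintype α] (A : α → α → ℝ) : ℝ := ∑ a, A a a

/-- Transpose: swaps the two index groups. -/
def ttr {α β : Type*} (A : α → β → ℝ) : β → α → ℝ := fun b a => A a b

/-- Frobenius inner product ⟨X, Y⟩ = tr(Yᵀ * X). -/
noncomputable def frobInner {α β : Type*} [Fintype α] [Fintype β]
    (X Y : α → β → ℝ) : ℝ := ttrace (eprod (ttr Y) X)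

/-- Frobenius norm of a tensor. -/
noncomputable def tnorm {α β : Type*} [Fintype α] [Fintype β]
    (X : α → β → ℝ) : ℝ := Real.sqrt (frobInner X X)

/-- Kronecker product of tensors (blockwise). -/
def kron {α β γ δ : Type*} (A : α → β → ℝ) (B : γ → δ → ℝ) :
    α × γ → β × δ → ℝ := fun p q => A p.1 q.1 * B p.2 q.2

/-- Vec: lines up the row-group slices into a single column index. -/
def tVec {α β : Type*} (X : α → β → ℝ) : β × α → ℝ := fun p => X p.2 p.1

/-- Einstein product of a tensor with a vectorized tensor. -/
def evec {α β : Type*} [Fintype β] (A : α → β → ℝ) (x : β → ℝ) : α → ℝ :=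
  fun a => ∑ b, A a b * x b

/-- Identity tensor. -/
def idT {α : Type*} [DecidableEq α] : α → α → ℝ := fun a b => if a = b then 1 else 0
theorem kron_mixed_product {M N : ℕ} (I : Fin M → ℕ) (J : Fin N → ℕ)
    (A : MIdx I → MIdx I → ℝ) (B D : MIdx I → MIdx J → ℝ)
    (C : MIdx J → MIdx J → ℝ) :
    eprod (kron A B) (kron D C) = kron (eprod A D) (eprod B C) := by
  funext p q
  simp only [eprod, kron, Fintype.sum_prod_type]
  rw [Finset.sum_mul_sum]
  exact Finset.sum_congr rfl fun b _ => Finset.sum_congr rfl fun b' _ => by ring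
end

section
/- For real tensors A of size I₁×⋯×I_M×I₁×⋯×I_M, B of size I₁×⋯×I_M×J₁×⋯×J_N, and C of size J₁×⋯×J_N×J₁×⋯×J_N: Vec(A *_M B *_N C) = (Cᵀ ⊗ A) *_N Vec(B). -/
open scoped BigOperators

theorem vec_of_triple_product {M N : ℕ} (I : Fin M → ℕ) (J : Fin N → ℕ)
    (A : MIdx I → MIdx I → ℝ) (B : MIdx I → MIdx J → ℝ)
    (C : MIdx J → MIdx J → ℝ) :
    tVec (eprod (eprod A B) C) = evec (kron (ttr C) A) (tVec B) := by
  funext p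
  simp only [tVec, eprod, evec, kron, ttr, Fintype.sum_prod_type, Finset.sum_mul]
  refine ((Finset.sum_comm ..).trans ?_).trans (Finset.sum_comm ..)
  apply Finset.sum_congr rfl
  intro y _
  apply Finset.sum_congr rfl
  intro x _
  ring
end

section
/- The Sylvester tensor equation A *_M X + X *_N C = D is equivalent to the vectorized equation (I₁ ⊗ A + Cᵀ ⊗ I₂) *_N Vec(X) = Vec(D), where I₁, I₂ are identity tensors of size J₁×⋯×J_N×J₁×⋯×J_N and I₁×⋯×I_M×I₁×⋯×I_M respectively. -/
open scoped BigOperators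

theorem sylvester_vectorized {M N : ℕ} (I : Fin M → ℕ) (J : Fin N → ℕ)
    (A : MIdx I → MIdx I → ℝ) (C : MIdx J → MIdx J → ℝ)
    (D X : MIdx I → MIdx J → ℝ) :
    eprod A X + eprod X C = D ↔
      evec (kron (idT (α := MIdx J)) A + kron (ttr C) (idT (α := MIdx I))) (tVec X)
        = tVec D := by
  have key : ∀ p : MIdx J × MIdx I,
      evec (kron (idT (α := MIdx J)) A + kron (ttr C) (idT (α := MIdx I))) (tVec X) p
        = (eprod A X + eprod X C) p.2 p.1 := by
    rintro ⟨j, i⟩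
    simp only [evec, kron, idT, ttr, tVec, eprod, Pi.add_apply, add_mul,
      Finset.sum_add_distrib, Fintype.sum_prod_type]
    congr 1
    · rw [Finset.sum_eq_single j]
      · simp [mul_comm]
      · intro b _ hb; simp [hb.symm]
      · intro h; exact absurd (Finset.mem_univ j) h
    · rw [Finset.sum_comm, Finset.sum_eq_single i]
      · simp [mul_comm, mul_left_comm]
      · intro b _ hb
        apply Finset.sum_eq_zero; intro l _; simp [hb.symm]
      · intro h; exact absurd (Finset.mem_univ i) h
  constructor
  · intro h; funext p; rw [key p, h]; rfl
  · intro h; funext i j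
    have := congrFun h (j, i)
    rw [key (j, i)] at this; exact this
end

section
/- Let X* be a solution of the tensor equation A *_M X = B (with A ∈ ℝ^{K₁×⋯×K_P×I₁×⋯×I_M}, B ∈ ℝ^{K₁×⋯×K_P×J₁×⋯×J_N}). If X* lies in the range space R(Aᵀ) = {Aᵀ *_P W : W ∈ ℝ^{K₁×⋯×K_P×J₁×⋯×J_N}}, then X* is the unique minimal Frobenius-norm solution: for every solution X of A *_M X = B with X ≠ X*, one has ‖X*‖ < ‖X‖. -/
open scoped BigOperators

lemma frobInner_eq {α β : Type*} [Fintype α] [Fintype β] (X Y : α → β → ℝ) :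
    frobInner X Y = ∑ a, ∑ b, X a b * Y a b := by
  unfold frobInner ttrace eprod ttr
  rw [Finset.sum_comm]
  simp [mul_comm]

lemma frobInner_self_nonneg {α β : Type*} [Fintype α] [Fintype β] (X : α → β → ℝ) :
    0 ≤ frobInner X X := by
  rw [frobInner_eq]
  apply Finset.sum_nonneg; intro a _
  apply Finset.sum_nonneg; intro b _
  exact mul_self_nonneg _

lemma frobInner_self_pos {α β : Type*} [Fintype α] [Fintype β] (X : α → β → ℝ)
    (hX : X ≠ 0) : 0 < frobInner X X := by
  rcases (frobInner_self_nonneg X).lt_or_eq with h | h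
  · exact h
  · exfalso; apply hX; funext a b
    have h' := h.symm
    rw [frobInner_eq] at h'
    have h1 : ∀ a ∈ Finset.univ, ∑ b, X a b * X a b = 0 := by
      intro a _
      have := (Finset.sum_eq_zero_iff_of_nonneg (fun a _ => Finset.sum_nonneg
        (fun b _ => mul_self_nonneg (X a b)))).mp h'
      exact this a (Finset.mem_univ a)
    have h2 := (Finset.sum_eq_zero_iff_of_nonneg
      (fun b _ => mul_self_nonneg (X a b))).mp (h1 a (Finset.mem_univ a)) b (Finset.mem_univ b)
    exact mul_self_eq_zero.mp h2

theorem least_norm_of_range_transpose {P M N : ℕ} (K : Fin P → ℕ) (I : Fin M → ℕ) (J : Fin N → ℕ)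
    (A : MIdx K → MIdx I → ℝ) (B : MIdx K → MIdx J → ℝ)
    (Xs : MIdx I → MIdx J → ℝ)
    (hsol : eprod A Xs = B)
    (hrange : ∃ W : MIdx K → MIdx J → ℝ, Xs = eprod (ttr A) W) :
    ∀ X : MIdx I → MIdx J → ℝ, eprod A X = B → X ≠ Xs → tnorm Xs < tnorm X := by
  obtain ⟨W, hW⟩ := hrange
  intro X hX hne
  set D : MIdx I → MIdx J → ℝ := fun i j => X i j - Xs i j with hD
  have hAD : eprod A (fun i j => D i j) = fun k j => 0 := by
    funext k j
    have h1 : eprod A X k j = B k j := by rw [hX]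
    have h2 : eprod A Xs k j = B k j := by rw [hsol]
    simp only [eprod, hD] at *
    simp [mul_sub, Finset.sum_sub_distrib, h1, h2]
  have horth : frobInner Xs D = 0 := by
    rw [frobInner_eq]
    have : ∀ i j, Xs i j = ∑ k, A k i * W k j := by
      intro i j; rw [hW]; rfl
    calc ∑ i, ∑ j, Xs i j * D i j
        = ∑ i, ∑ j, ∑ k, A k i * W k j * D i j := by
          refine Finset.sum_congr rfl fun i _ => Finset.sum_congr rfl fun j _ => ?_
          rw [this i j, Finset.sum_mul]
      _ = ∑ k, ∑ j, W k j * ∑ i, A k i * D i j := by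
          rw [Finset.sum_comm]
          conv_rhs => rw [Finset.sum_comm]
          refine Finset.sum_congr rfl fun j _ => ?_
          rw [Finset.sum_comm]
          refine Finset.sum_congr rfl fun k _ => ?_
          rw [Finset.mul_sum]
          refine Finset.sum_congr rfl fun i _ => ?_
          ring
      _ = 0 := by
          refine Finset.sum_eq_zero fun k _ => Finset.sum_eq_zero fun j _ => ?_
          have : eprod A (fun i j => D i j) k j = 0 := by rw [hAD]
          simp only [eprod] at this
          rw [this, mul_zero]
  have hXdec : ∀ i j, X i j = Xs i j + D i j := by intro i j; simp [hD]
  have hexp : frobInner X X = frobInner Xs Xs + frobInner D D := by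
    simp only [frobInner_eq] at horth ⊢
    have : ∀ i j, X i j * X i j = Xs i j * Xs i j + D i j * D i j + 2 * (Xs i j * D i j) := by
      intro i j; rw [hXdec i j]; ring
    calc ∑ i, ∑ j, X i j * X i j
        = (∑ i, ∑ j, Xs i j * Xs i j) + (∑ i, ∑ j, D i j * D i j)
          + 2 * (∑ i, ∑ j, Xs i j * D i j) := by
          simp only [this, Finset.sum_add_distrib, Finset.mul_sum]
      _ = _ := by rw [horth]; ring
  have hDne : D ≠ 0 := by
    intro h
    apply hne
    funext i j
    have : D i j = 0 := by rw [h]; rfl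
    have := hXdec i j
    simp [‹D i j = 0›] at this
    exact this
  have hpos := frobInner_self_pos D hDne
  have hlt : frobInner Xs Xs < frobInner X X := by rw [hexp]; linarith
  unfold tnorm
  exact Real.sqrt_lt_sqrt (frobInner_self_nonneg Xs) hlt
end

section
/- Let the sequences R^(k), P^(k), X^(k) be generated by the conjugate-gradient-type iteration: R^(1) = D − A*_M X^(1) − X^(1)*_N C, P^(1) = Aᵀ*_M R^(1) + R^(1)*_N Cᵀ; X^(k+1) = X^(k) + (‖R^(k)‖²/‖P^(k)‖²) P^(k); R^(k+1) = D − A*_M X^(k+1) − X^(k+1)*_N C; P^(k+1) = Aᵀ*_M R^(k+1) + R^(k+1)*_N Cᵀ + (‖R^(k+1)‖²/‖R^(k)‖²) P^(k). Assuming all R^(k), P^(k) are nonzero for k < t, then for all i ≠ j with i, j ≤ t: tr((R^(i))ᵀ *_M R^(j)) = 0 and tr((P^(i))ᵀ *_M P^(j)) = 0. -/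
open scoped BigOperators

/-!
With `L X = A * X + X * C`, whose adjoint for the Frobenius form is `L* Y = Aᵀ * Y + Y * Cᵀ`, the
iteration reads `R (k+1) = R k - α k • L (P k)` and `P (k+1) = L* (R (k+1)) + β k • P k`. Orthogonality
of `R (m+1)` and `P (m+1)` to all earlier residuals and directions follows by induction on `m`:
moving `L` across the form turns `⟨L (P m), R i⟩` into `⟨P m, L* (R i)⟩`, which is `⟨P m, P i⟩` up to
a multiple of `⟨P m, P (i-1)⟩`, and `⟨L* (R (m+1)), P i⟩` into
`⟨R (m+1), L (P i)⟩ = (⟨R (m+1), R i⟩ - ⟨R (m+1), R (i+1)⟩) / α i`. The step sizes `α m`, `β m` are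
exactly the ones that cancel the diagonal terms `i = m`.
-/

section CraigIteration

variable {𝕜 E F : Type*} [Field 𝕜] [AddCommGroup E] [Module 𝕜 E] [AddCommGroup F] [Module 𝕜 F]

/-- Residuals `R k` and search directions `P k` (indexed from `1`) of Craig's method, i.e. conjugate
gradients on the normal equations of the second kind, for `L x = d`; `L'` plays the adjoint of `L`. -/
structure IsCraigIteration (B : LinearMap.BilinForm 𝕜 E) (B' : LinearMap.BilinForm 𝕜 F)
    (L : E →ₗ[𝕜] F) (L' : F →ₗ[𝕜] E) (R : ℕ → F) (P : ℕ → E) : Prop where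
  residual_succ : ∀ k, 1 ≤ k → R (k + 1) = R k - (B' (R k) (R k) / B (P k) (P k)) • L (P k)
  dir_one : P 1 = L' (R 1)
  dir_succ : ∀ k, 1 ≤ k →
    P (k + 1) = L' (R (k + 1)) + (B' (R (k + 1)) (R (k + 1)) / B' (R k) (R k)) • P k

namespace IsCraigIteration

variable {B : LinearMap.BilinForm 𝕜 E} {B' : LinearMap.BilinForm 𝕜 F} {L : E →ₗ[𝕜] F}
  {L' : F →ₗ[𝕜] E} {R : ℕ → F} {P : ℕ → E}

theorem apply_adjoint_residual (h : IsCraigIteration B B' L L' R P) {y : E} {i : ℕ} (hi : 1 ≤ i)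
    (hy : ∀ j, 1 ≤ j → j < i → B y (P j) = 0) : B y (L' (R i)) = B y (P i) := by
  obtain ⟨n, rfl⟩ : ∃ n, i = n + 1 := ⟨i - 1, by omega⟩
  rcases n with _ | n
  · rw [h.dir_one]
  · rw [h.dir_succ (n + 1) (by omega), map_add, map_smul, smul_eq_mul,
      hy (n + 1) (by omega) (by omega), mul_zero, add_zero]

theorem apply_residual_succ (h : IsCraigIteration B B' L L' R P) (hadj : B.IsAdjointPair B' L L')
    {k : ℕ} (hk : 1 ≤ k) (z : F) :
    B' (R (k + 1)) z = B' (R k) z - B' (R k) (R k) / B (P k) (P k) * B (P k) (L' z) := by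
  rw [h.residual_succ k hk, map_sub, map_smul, LinearMap.sub_apply, LinearMap.smul_apply,
    smul_eq_mul, hadj]

theorem apply_dir_succ (h : IsCraigIteration B B' L L' R P) (hadj : B.IsAdjointPair B' L L')
    (hB : B.IsSymm) (hB' : B'.IsSymm) {k : ℕ} (hk : 1 ≤ k) (x : E) :
    B (P (k + 1)) x
      = B' (R (k + 1)) (L x) + B' (R (k + 1)) (R (k + 1)) / B' (R k) (R k) * B (P k) x := by
  rw [h.dir_succ k hk, map_add, map_smul, LinearMap.add_apply, LinearMap.smul_apply, smul_eq_mul,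
    hB.eq, ← hadj, hB'.eq]

theorem mul_apply_map_dir (h : IsCraigIteration B B' L L' R P) {k : ℕ} (hk : 1 ≤ k) (z : F) :
    B' (R k) (R k) / B (P k) (P k) * B' z (L (P k)) = B' z (R k) - B' z (R (k + 1)) := by
  rw [h.residual_succ k hk, map_sub, map_smul, smul_eq_mul]
  ring

theorem residual_succ_orthogonal (h : IsCraigIteration B B' L L' R P)
    (hadj : B.IsAdjointPair B' L L') {m : ℕ} (hm : 1 ≤ m) (hπ : B (P m) (P m) ≠ 0)
    (hR : ∀ i, 1 ≤ i → i < m → B' (R m) (R i) = 0) (hP : ∀ i, 1 ≤ i → i < m → B (P m) (P i) = 0)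
    {i : ℕ} (hi : 1 ≤ i) (him : i ≤ m) : B' (R (m + 1)) (R i) = 0 := by
  rw [h.apply_residual_succ hadj hm, h.apply_adjoint_residual hi fun j hj hji => hP j hj (by omega)]
  rcases him.lt_or_eq with hlt | rfl
  · rw [hR i hi hlt, hP i hi hlt, mul_zero, sub_zero]
  · rw [div_mul_cancel₀ _ hπ, sub_self]

theorem dir_succ_orthogonal (h : IsCraigIteration B B' L L' R P) (hadj : B.IsAdjointPair B' L L')
    (hB : B.IsSymm) (hB' : B'.IsSymm) {m : ℕ} (hm : 1 ≤ m)
    (hP : ∀ i, 1 ≤ i → i < m → B (P m) (P i) = 0)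
    (hR : ∀ i, 1 ≤ i → i ≤ m → B' (R (m + 1)) (R i) = 0)
    {i : ℕ} (hi : 1 ≤ i) (him : i ≤ m) (hρ : B' (R i) (R i) ≠ 0) (hπ : B (P i) (P i) ≠ 0) :
    B (P (m + 1)) (P i) = 0 := by
  have hstep := h.mul_apply_map_dir hi (R (m + 1))
  rw [h.apply_dir_succ hadj hB hB' hm]
  rcases him.lt_or_eq with hlt | rfl
  · rw [hR i hi him, hR (i + 1) (by omega) hlt, sub_zero, mul_eq_zero,
      or_iff_right (div_ne_zero hρ hπ)] at hstep
    rw [hstep, hP i hi hlt, mul_zero, add_zero]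
  · rw [hR i hi le_rfl, zero_sub] at hstep
    field_simp at hstep ⊢
    linear_combination hstep

theorem orthogonal_of_lt (h : IsCraigIteration B B' L L' R P) (hadj : B.IsAdjointPair B' L L')
    (hB : B.IsSymm) (hB' : B'.IsSymm) {t : ℕ}
    (hρ : ∀ k, 1 ≤ k → k < t → B' (R k) (R k) ≠ 0) (hπ : ∀ k, 1 ≤ k → k < t → B (P k) (P k) ≠ 0) :
    ∀ k ≤ t, ∀ i, 1 ≤ i → i < k → B' (R k) (R i) = 0 ∧ B (P k) (P i) = 0 := by
  intro k
  induction k with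
  | zero => intro _ i hi hik; omega
  | succ m ih =>
    intro hmt i hi him
    have hm : 1 ≤ m := by omega
    have ih := ih (by omega)
    have hR : ∀ i, 1 ≤ i → i ≤ m → B' (R (m + 1)) (R i) = 0 := fun i hi him =>
      h.residual_succ_orthogonal hadj hm (hπ m hm (by omega)) (fun j hj hjm => (ih j hj hjm).1)
        (fun j hj hjm => (ih j hj hjm).2) hi him
    exact ⟨hR i hi (by omega), h.dir_succ_orthogonal hadj hB hB' hm
      (fun j hj hjm => (ih j hj hjm).2) hR hi (by omega) (hρ i hi (by omega)) (hπ i hi (by omega))⟩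

theorem orthogonal (h : IsCraigIteration B B' L L' R P) (hadj : B.IsAdjointPair B' L L')
    (hB : B.IsSymm) (hB' : B'.IsSymm) {t : ℕ}
    (hρ : ∀ k, 1 ≤ k → k < t → B' (R k) (R k) ≠ 0) (hπ : ∀ k, 1 ≤ k → k < t → B (P k) (P k) ≠ 0)
    {i j : ℕ} (hi : 1 ≤ i) (hit : i ≤ t) (hj : 1 ≤ j) (hjt : j ≤ t) (hij : i ≠ j) :
    B' (R i) (R j) = 0 ∧ B (P i) (P j) = 0 := by
  rcases hij.lt_or_gt with hlt | hlt
  · rw [hB'.eq, hB.eq]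
    exact h.orthogonal_of_lt hadj hB hB' hρ hπ j hjt i hi hlt
  · exact h.orthogonal_of_lt hadj hB hB' hρ hπ i hit j hj hlt

end IsCraigIteration

end CraigIteration

section Frobenius

open Matrix

variable {α β : Type*} [Fintype α] [Fintype β]

theorem frobInner_eq_trace (X Y : α → β → ℝ) : frobInner X Y = ((of Y)ᵀ * of X).trace := rfl

theorem frobInner_comm (X Y : α → β → ℝ) : frobInner X Y = frobInner Y X := by
  rw [frobInner_eq_trace, frobInner_eq_trace, ← trace_transpose, transpose_mul,
    transpose_transpose]

theorem frobInner_self_eq_zero_iff (X : α → β → ℝ) : frobInner X X = 0 ↔ X = 0 := by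
  rw [frobInner_eq_trace, ← conjTranspose_eq_transpose_of_trivial,
    trace_conjTranspose_mul_self_eq_zero_iff]
  rfl

theorem frobInner_eprod_left (A : α → α → ℝ) (X Y : α → β → ℝ) :
    frobInner (eprod A X) Y = frobInner X (eprod (ttr A) Y) := by
  change ((of Y)ᵀ * (of A * of X)).trace = (((of A)ᵀ * of Y)ᵀ * of X).trace
  rw [transpose_mul, transpose_transpose, Matrix.mul_assoc]

theorem frobInner_eprod_right (C : β → β → ℝ) (X Y : α → β → ℝ) :
    frobInner (eprod X C) Y = frobInner X (eprod Y (ttr C)) := by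
  change ((of Y)ᵀ * (of X * of C)).trace = ((of Y * (of C)ᵀ)ᵀ * of X).trace
  rw [transpose_mul, transpose_transpose, ← Matrix.mul_assoc, trace_mul_comm, Matrix.mul_assoc]

variable (α β) in
noncomputable def frobForm : LinearMap.BilinForm ℝ (α → β → ℝ) :=
  LinearMap.mk₂ ℝ frobInner
    (fun X X' Y => by simp [frobInner_eq_trace, ← of_add_of, Matrix.mul_add])
    (fun c X Y => by simp [frobInner_eq_trace, ← smul_of])
    (fun X Y Y' => by simp [frobInner_eq_trace, ← of_add_of, Matrix.add_mul])
    (fun c X Y => by simp [frobInner_eq_trace, ← smul_of])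

theorem frobForm_isSymm : (frobForm α β).IsSymm := ⟨frobInner_comm⟩

def sylvesterMap (A : α → α → ℝ) (C : β → β → ℝ) : (α → β → ℝ) →ₗ[ℝ] (α → β → ℝ) where
  toFun X := eprod A X + eprod X C
  map_add' X Y := by
    ext a b
    simp only [eprod, Pi.add_apply, mul_add, add_mul, Finset.sum_add_distrib]
    ring
  map_smul' c X := by
    ext a b
    simp only [eprod, Pi.add_apply, Pi.smul_apply, smul_eq_mul, RingHom.id_apply, mul_add,
      Finset.mul_sum, mul_assoc, mul_left_comm]

theorem isAdjointPair_sylvesterMap (A : α → α → ℝ) (C : β → β → ℝ) :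
    (frobForm α β).IsAdjointPair (frobForm α β) (sylvesterMap A C)
      (sylvesterMap (ttr A) (ttr C)) := fun X Y => by
  change frobForm α β (eprod A X + eprod X C) Y = frobForm α β X (eprod (ttr A) Y + eprod Y (ttr C))
  rw [map_add, map_add, LinearMap.add_apply]
  exact congrArg₂ (· + ·) (frobInner_eprod_left A X Y) (frobInner_eprod_right C X Y)

end Frobenius

theorem algorithm_orthogonality {M N : ℕ} (I : Fin M → ℕ) (J : Fin N → ℕ)
(A : MIdx I → MIdx I → ℝ) (C : MIdx J → MIdx J → ℝ)
    (D : MIdx I → MIdx J → ℝ)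
    (X R P : ℕ → MIdx I → MIdx J → ℝ)
    (hR : ∀ k, 1 ≤ k → R k = D - (eprod A (X k) + eprod (X k) C))
    (hP1 : P 1 = eprod (ttr A) (R 1) + eprod (R 1) (ttr C))
    (hX : ∀ k, 1 ≤ k →
      X (k + 1) = X k + (frobInner (R k) (R k) / frobInner (P k) (P k)) • P k)
    (hP : ∀ k, 1 ≤ k →
      P (k + 1) = eprod (ttr A) (R (k + 1)) + eprod (R (k + 1)) (ttr C)
        + (frobInner (R (k + 1)) (R (k + 1)) / frobInner (R k) (R k)) • P k)
    (t : ℕ) (hnz : ∀ k, 1 ≤ k → k < t → R k ≠ 0 ∧ P k ≠ 0) :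
    ∀ i j, 1 ≤ i → i ≤ t → 1 ≤ j → j ≤ t → i ≠ j →
      ttrace (eprod (ttr (R i)) (R j)) = 0 ∧
      ttrace (eprod (ttr (P i)) (P j)) = 0 := by
  have hres : ∀ k, 1 ≤ k → R k = D - sylvesterMap A C (X k) := hR
  have hcraig : IsCraigIteration (frobForm _ _) (frobForm _ _) (sylvesterMap A C)
      (sylvesterMap (ttr A) (ttr C)) R P :=
    { residual_succ := fun k hk => by
        rw [hres (k + 1) (by omega), hX k hk, map_add, map_smul, hres k hk, sub_add_eq_sub_sub]
        rfl
      dir_one := hP1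
      dir_succ := hP }
  intro i j hi hit hj hjt hij
  -- `ttrace (eprod (ttr Y) X)` is `frobInner X Y`, hence the swapped indices.
  exact hcraig.orthogonal (isAdjointPair_sylvesterMap A C) frobForm_isSymm frobForm_isSymm
    (fun k hk hkt => (frobInner_self_eq_zero_iff _).not.mpr (hnz k hk hkt).1)
    (fun k hk hkt => (frobInner_self_eq_zero_iff _).not.mpr (hnz k hk hkt).2) hj hjt hi hit hij.symm
end

section
/- With the iteration of Algorithm 3.1 (as defined in the context) and X̃ any solution of A *_M X + X *_N C = D, one has tr((X̃ − X^(k))ᵀ *_M P^(k)) = ‖R^(k)‖² for all k ≥ 1 (as long as the iterates are defined, i.e., R^(j), P^(j) ≠ 0 for j < k). -/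
open scoped BigOperators

section helpers
variable {α β : Type*} [Fintype α] [Fintype β]

lemma frobInner_def (X Y : α → β → ℝ) :
    frobInner X Y = ∑ b, ∑ a, Y a b * X a b := by
  simp [frobInner, ttrace, eprod, ttr]

lemma frob_add_left (X X' Y : α → β → ℝ) :
    frobInner (X + X') Y = frobInner X Y + frobInner X' Y := by
  simp [frobInner_def, Pi.add_apply, mul_add, Finset.sum_add_distrib]

lemma frob_smul_left (c : ℝ) (X Y : α → β → ℝ) :
    frobInner (c • X) Y = c * frobInner X Y := by
  simp [frobInner_def, Finset.mul_sum, mul_left_comm]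

lemma frob_add_right (X Y Y' : α → β → ℝ) :
    frobInner X (Y + Y') = frobInner X Y + frobInner X Y' := by
  simp [frobInner_def, Pi.add_apply, add_mul, Finset.sum_add_distrib]

lemma frob_sub_right (X Y Y' : α → β → ℝ) :
    frobInner X (Y - Y') = frobInner X Y - frobInner X Y' := by
  simp [frobInner_def, Pi.sub_apply, sub_mul, Finset.sum_sub_distrib]

lemma frob_smul_right (c : ℝ) (X Y : α → β → ℝ) :
    frobInner X (c • Y) = c * frobInner X Y := by
  simp [frobInner_def, Finset.mul_sum, mul_assoc]

lemma frob_self_eq_zero {X : α → β → ℝ} (h : frobInner X X = 0) : X = 0 := by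
  rw [frobInner_def] at h
  funext a b
  have hb : ∀ b ∈ Finset.univ, (0:ℝ) ≤ ∑ a, X a b * X a b :=
    fun b _ => Finset.sum_nonneg fun a _ => mul_self_nonneg _
  have h1 := (Finset.sum_eq_zero_iff_of_nonneg hb).1 h b (Finset.mem_univ b)
  have h2 := (Finset.sum_eq_zero_iff_of_nonneg
    (fun a _ => mul_self_nonneg (X a b))).1 h1 a (Finset.mem_univ a)
  exact mul_self_eq_zero.mp h2

lemma frob_adjA (A : α → α → ℝ) (R E : α → β → ℝ) :
    frobInner (eprod (ttr A) R) E = frobInner R (eprod A E) := by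
  simp only [frobInner_def, eprod, ttr, Finset.mul_sum, Finset.sum_mul]
  refine Finset.sum_congr rfl fun b _ => ?_
  rw [Finset.sum_comm]
  exact Finset.sum_congr rfl fun a _ => Finset.sum_congr rfl fun a' _ => by ring

lemma frob_adjC (C : β → β → ℝ) (R E : α → β → ℝ) :
    frobInner (eprod R (ttr C)) E = frobInner R (eprod E C) := by
  simp only [frobInner_def, eprod, ttr, Finset.mul_sum, Finset.sum_mul]
  refine Eq.trans Finset.sum_comm ?_
  refine Eq.trans (Finset.sum_congr rfl fun a _ => Finset.sum_comm) ?_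
  refine Eq.trans Finset.sum_comm ?_
  exact Finset.sum_congr rfl fun b' _ => Finset.sum_congr rfl fun a _ =>
    Finset.sum_congr rfl fun b _ => by ring

lemma eprod_sub_right {γ : Type*} (A : γ → α → ℝ) (Y Z : α → β → ℝ) :
    eprod A (Y - Z) = eprod A Y - eprod A Z := by
  funext a c
  simp [eprod, Pi.sub_apply, mul_sub, Finset.sum_sub_distrib]

lemma eprod_sub_left {γ : Type*} (Y Z : α → β → ℝ) (C : β → γ → ℝ) :
    eprod (Y - Z) C = eprod Y C - eprod Z C := by
  funext a c
  simp [eprod, Pi.sub_apply, sub_mul, Finset.sum_sub_distrib]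

end helpers

theorem algorithm_descent_identity {M N : ℕ} (I : Fin M → ℕ) (J : Fin N → ℕ)
(A : MIdx I → MIdx I → ℝ) (C : MIdx J → MIdx J → ℝ)
    (D : MIdx I → MIdx J → ℝ)
    (X R P : ℕ → MIdx I → MIdx J → ℝ)
    (hR : ∀ k, 1 ≤ k → R k = D - (eprod A (X k) + eprod (X k) C))
    (hP1 : P 1 = eprod (ttr A) (R 1) + eprod (R 1) (ttr C))
    (hX : ∀ k, 1 ≤ k →
      X (k + 1) = X k + (frobInner (R k) (R k) / frobInner (P k) (P k)) • P k)
    (hP : ∀ k, 1 ≤ k →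
      P (k + 1) = eprod (ttr A) (R (k + 1)) + eprod (R (k + 1)) (ttr C)
        + (frobInner (R (k + 1)) (R (k + 1)) / frobInner (R k) (R k)) • P k)
    (Xt : MIdx I → MIdx J → ℝ) (hXt : eprod A Xt + eprod Xt C = D) :
    ∀ k, 1 ≤ k → (∀ j, 1 ≤ j → j < k → R j ≠ 0 ∧ P j ≠ 0) →
      ttrace (eprod (ttr (Xt - X k)) (P k)) = frobInner (R k) (R k) := by
  have hres : ∀ m, 1 ≤ m → R m = eprod A (Xt - X m) + eprod (Xt - X m) C := by
    intro m hm
    rw [hR m hm, ← hXt, eprod_sub_right, eprod_sub_left]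
    abel
  have key : ∀ m, 1 ≤ m →
      frobInner (eprod (ttr A) (R m) + eprod (R m) (ttr C)) (Xt - X m)
        = frobInner (R m) (R m) := by
    intro m hm
    rw [frob_add_left, frob_adjA, frob_adjC, ← frob_add_right, ← hres m hm]
  intro k
  induction k with
  | zero => omega
  | succ n ih =>
    intro _ hnz
    show frobInner (P (n + 1)) (Xt - X (n + 1)) = frobInner (R (n + 1)) (R (n + 1))
    rcases Nat.eq_zero_or_pos n with hn | hn
    · subst hn
      rw [hP1]
      exact key 1 le_rfl
    · have ihf : frobInner (P n) (Xt - X n) = frobInner (R n) (R n) :=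
        ih hn (fun j hj hjn => hnz j hj (Nat.lt_succ_of_lt hjn))
      have hPn : frobInner (P n) (P n) ≠ 0 := fun h =>
        (hnz n hn (Nat.lt_succ_self n)).2 (frob_self_eq_zero h)
      have hXE : Xt - X (n + 1)
          = (Xt - X n) - (frobInner (R n) (R n) / frobInner (P n) (P n)) • P n := by
        rw [hX n hn, sub_add_eq_sub_sub]
      rw [hP n hn, frob_add_left, key (n + 1) (by omega), frob_smul_left, hXE,
        frob_sub_right, frob_smul_right, ihf, div_mul_cancel₀ _ hPn]
      ring
end

section
/- In Algorithm 3.1 with initial tensor X^(1) = Aᵀ *_M W + W *_N Cᵀ for some tensor W (in particular X^(1) = 0), every iterate X^(k) has the form X^(k) = Aᵀ *_M H + H *_N Cᵀ for some tensor H ∈ ℝ^{I₁×⋯×I_M×J₁×⋯×J_N}. -/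
open scoped BigOperators

lemma eprod_linear_comb {α β γ : Type*} [Fintype β] (A : α → β → ℝ)
    (H G : β → γ → ℝ) (c : ℝ) :
    eprod A (H + c • G) = eprod A H + c • eprod A G := by
  funext a b
  simp only [eprod, Pi.add_apply, Pi.smul_apply, smul_eq_mul, mul_add,
    Finset.sum_add_distrib, Finset.mul_sum]
  congr 1
  exact Finset.sum_congr rfl fun x _ => by ring

lemma eprod_linear_comb' {α β γ : Type*} [Fintype β] (C : β → γ → ℝ)
    (H G : α → β → ℝ) (c : ℝ) :
    eprod (H + c • G) C = eprod H C + c • eprod G C := by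
  funext a b
  simp only [eprod, Pi.add_apply, Pi.smul_apply, smul_eq_mul, add_mul,
    Finset.sum_add_distrib, Finset.mul_sum]
  congr 1
  exact Finset.sum_congr rfl fun x _ => by ring

theorem iterates_in_adjoint_range {M N : ℕ} (I : Fin M → ℕ) (J : Fin N → ℕ)
(A : MIdx I → MIdx I → ℝ) (C : MIdx J → MIdx J → ℝ)
    (D : MIdx I → MIdx J → ℝ)
    (X R P : ℕ → MIdx I → MIdx J → ℝ)
    (hR : ∀ k, 1 ≤ k → R k = D - (eprod A (X k) + eprod (X k) C))
    (hP1 : P 1 = eprod (ttr A) (R 1) + eprod (R 1) (ttr C))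
    (hX : ∀ k, 1 ≤ k →
      X (k + 1) = X k + (frobInner (R k) (R k) / frobInner (P k) (P k)) • P k)
    (hP : ∀ k, 1 ≤ k →
      P (k + 1) = eprod (ttr A) (R (k + 1)) + eprod (R (k + 1)) (ttr C)
        + (frobInner (R (k + 1)) (R (k + 1)) / frobInner (R k) (R k)) • P k)
    (hX1 : ∃ W : MIdx I → MIdx J → ℝ, X 1 = eprod (ttr A) W + eprod W (ttr C)) :
    ∀ k, 1 ≤ k → ∃ H : MIdx I → MIdx J → ℝ,
      X k = eprod (ttr A) H + eprod H (ttr C) := by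
  intro k hk
  suffices h : ∀ k, 1 ≤ k → (∃ H, X k = eprod (ttr A) H + eprod H (ttr C)) ∧
      (∃ G, P k = eprod (ttr A) G + eprod G (ttr C)) from (h k hk).1
  intro k hk
  induction k, hk using Nat.le_induction with
  | base =>
    exact ⟨hX1, ⟨R 1, hP1⟩⟩
  | succ k hk ih =>
    obtain ⟨⟨H, hH⟩, G, hG⟩ := ih
    constructor
    · refine ⟨H + (frobInner (R k) (R k) / frobInner (P k) (P k)) • G, ?_⟩
      rw [hX k hk, hH, hG, eprod_linear_comb, eprod_linear_comb']
      funext a b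
      simp only [Pi.add_apply, Pi.smul_apply, smul_eq_mul]
      ring
    · refine ⟨R (k + 1) + (frobInner (R (k+1)) (R (k+1)) / frobInner (R k) (R k)) • G, ?_⟩
      rw [hP k hk, hG, eprod_linear_comb, eprod_linear_comb']
      funext a b
      simp only [Pi.add_apply, Pi.smul_apply, smul_eq_mul]
      ring
end
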